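/- Let G be a graph, v ∈ V(G), and let D_1,…,D_m be the components of G\N[v]. Let Z ⊆ N(v) and let H be the graph with vertex set (N(v)\Z) ∪ {d_1,…,d_m} where {d_1,…,d_m} is a stable set, N_H(d_i) = N(D_i)\Z, and edges among N(v)\Z as in G. Given a tree decomposition (T_0,χ_0) of H and tree decompositions (T_i,χ_i) of D_i, form T by joining each T_i by an edge to a node v(i) of T_0 with d_i ∈ χ_0(v(i)), and define χ(u) = (χ_0(u)\{d_1,…,d_m}) ∪ Z ∪ {v} ∪ ⋃_{d_i ∈ χ_0(u)} N_H(d_i) for u ∈ T_0, and χ(u) = χ_i(u) ∪ N_H(d_i) ∪ Z ∪ {v} for u ∈ T_i (where adding {v} to the latter bags is harmless). Then (T,χ) is a tree decomposition of G, provided N(D_i) ⊆ N(v) for all i. -/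

import Mathlib

universe u v

variable {V : Type u}

/-- The open neighborhood of a set `D`: vertices outside `D` with a neighbor in `D`. -/
def nbhd (G : SimpleGraph V) (D : Set V) : Set V :=
  {w | w ∉ D ∧ ∃ u ∈ D, G.Adj u w}

/-- `u` and `w` are joined by a walk all of whose vertices lie in `S`. -/
def ConnectedIn (G : SimpleGraph V) (S : Set V) (u w : V) : Prop :=
  ∃ p : G.Walk u w, ∀ x ∈ p.support, x ∈ S

/-- `D` is a connected component of the subgraph of `G` induced on `S`. -/
def IsCompOf (G : SimpleGraph V) (S : Set V) (D : Set V) : Prop :=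
  D.Nonempty ∧ D ⊆ S ∧ (∀ u ∈ D, ∀ w ∈ D, ConnectedIn G D u w) ∧
    ∀ u ∈ D, ∀ w ∈ S, G.Adj u w → w ∈ D

/-- `X` is a minimal separator: some `u, w` outside `X` are separated by `X`
but by no proper subset of `X`. -/
def IsMinimalSeparator (G : SimpleGraph V) (X : Set V) : Prop :=
  ∃ u w : V, u ∉ X ∧ w ∉ X ∧ ¬ ConnectedIn G Xᶜ u w ∧
    ∀ Y : Set V, Y ⊂ X → ConnectedIn G Yᶜ u w

/-- A tree decomposition of the subgraph of `G` induced on `W`. -/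
structure IsTreeDecompOn {T : Type v} (G : SimpleGraph V) (W : Set V)
    (tree : SimpleGraph T) (χ : T → Set V) : Prop where
  isTree : tree.IsTree
  bags_subset : ∀ t, χ t ⊆ W
  mem_bag : ∀ x ∈ W, ∃ t, x ∈ χ t
  edge_bag : ∀ x ∈ W, ∀ y ∈ W, G.Adj x y → ∃ t, x ∈ χ t ∧ y ∈ χ t
  trace_connected : ∀ x : V, ∀ t₁, x ∈ χ t₁ → ∀ t₂, x ∈ χ t₂ →
    ConnectedIn tree {t | x ∈ χ t} t₁ t₂

/-- A tree decomposition of `G`. -/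
def IsTreeDecomp {T : Type v} (G : SimpleGraph V)
    (tree : SimpleGraph T) (χ : T → Set V) : Prop :=
  IsTreeDecompOn G Set.univ tree χ

/-- The treewidth of `G`: the least `w` such that `G` has a tree decomposition
all of whose bags have at most `w + 1` vertices. -/
noncomputable def treewidth (G : SimpleGraph V) : ℕ :=
  sInf {w | ∃ (n : ℕ) (tree : SimpleGraph (Fin n)) (χ : Fin n → Set V),
    IsTreeDecomp G tree χ ∧ ∀ t, (χ t).ncard ≤ w + 1}

/-- `G` is chordal: it has no induced cycle of length at least 4. -/
def IsChordal (G : SimpleGraph V) : Prop :=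
  ∀ n : ℕ, 4 ≤ n → ¬ ∃ f : Fin n → V, Function.Injective f ∧
    ∀ i j : Fin n, G.Adj (f i) (f j) ↔
      ((i.val + 1) % n = j.val ∨ (j.val + 1) % n = i.val)

/-- `H` is a minimal chordal completion (fill-in) of `G`. -/
def IsMinimalChordalCompletion (G H : SimpleGraph V) : Prop :=
  G ≤ H ∧ IsChordal H ∧
    ∀ H' : SimpleGraph V, G ≤ H' → H' ≤ H → IsChordal H' → H' = H

/-- `Ω` is a potential maximal clique of `G`: a maximal clique of some minimal
chordal completion of `G`. -/
def IsPMC (G : SimpleGraph V) (Ω : Set V) : Prop :=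
  ∃ H : SimpleGraph V, IsMinimalChordalCompletion G H ∧
    H.IsClique Ω ∧ ∀ Ω' : Set V, H.IsClique Ω' → Ω ⊆ Ω' → Ω' = Ω

/-- The clique number `ω(G)`. -/
noncomputable def cliqueNumber (G : SimpleGraph V) : ℕ :=
  sSup {n | ∃ s : Finset V, G.IsNClique n s}

/-- A stable (independent) set of vertices. -/
def StableSet (G : SimpleGraph V) (S : Set V) : Prop :=
  ∀ u ∈ S, ∀ w ∈ S, ¬ G.Adj u w

/-- The Ramsey number `R(t, s)`: the least `n` such that every graph on `n`
vertices contains a clique of size `t` or a stable set of size `s`. -/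
noncomputable def ramseyNum (t s : ℕ) : ℕ :=
  sInf {n | ∀ G : SimpleGraph (Fin n),
    (∃ K : Finset (Fin n), G.IsNClique t K) ∨
    (∃ S : Finset (Fin n), S.card = s ∧ StableSet G ↑S)}

/-- `G` is `d`-degenerate: every induced subgraph has a vertex of degree less
than `d` (within that subgraph). -/
def DegenerateLE (G : SimpleGraph V) (d : ℕ) : Prop :=
  ∀ W : Set V, W.Nonempty → ∃ x ∈ W, (W ∩ G.neighborSet x).ncard < d

/-- `D` is the big component for `x`: a component of `G \ N[x]` with more than
half of all vertices. -/
def IsBigComp (G : SimpleGraph V) (x : V) (D : Set V) : Prop :=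
  IsCompOf G ((insert x (G.neighborSet x))ᶜ) D ∧ Nat.card V < 2 * D.ncard

/-- The `C`-side of the canonical star separation: `C(x) = {x} ∪ N(B(x))`. -/
def Cside (G : SimpleGraph V) (B : V → Set V) (x : V) : Set V :=
  insert x (nbhd G (B x))

/-- The `A`-side of the canonical star separation. -/
def Aside (G : SimpleGraph V) (B : V → Set V) (x : V) : Set V :=
  (B x ∪ Cside G B x)ᶜ

/-- Star twins. -/
def StarTwins (G : SimpleGraph V) (B : V → Set V) (x y : V) : Prop :=
  B x = B y ∧ Cside G B x \ {x} = Cside G B y \ {y} ∧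
    Aside G B x ∪ {x} = Aside G B y ∪ {y}

/-- The relation `≤_A` (partial order by `A`-sides, ties among star twins
broken by the total order `O`). -/
def leA (G : SimpleGraph V) (B : V → Set V) (O : V → ℕ) (x y : V) : Prop :=
  x = y ∨ (StarTwins G B x y ∧ O x < O y) ∨
    (¬ StarTwins G B x y ∧ y ∈ Aside G B x)

/-- `Core(S)`: the `≤_A`-minimal elements of `S`. -/
def CoreS (G : SimpleGraph V) (S : Set V) (B : V → Set V) (O : V → ℕ) : Set V :=
  {x ∈ S | ∀ u ∈ S, leA G B O u x → u = x}

/-- The central bag `β(S)`. -/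
def centralBag (G : SimpleGraph V) (S : Set V) (B : V → Set V) (O : V → ℕ) :
    Set V :=
  ⋂ x ∈ CoreS G S B O, (B x ∪ Cside G B x)

/-- `G` has a clique cutset. -/
def HasCliqueCutset (G : SimpleGraph V) : Prop :=
  ∃ K : Set V, G.IsClique K ∧ ∃ u w, u ∉ K ∧ w ∉ K ∧ ¬ ConnectedIn G Kᶜ u w

/-- A chordless (induced) path, as a walk. -/
def IsInducedPathW (G : SimpleGraph V) {a b : V} (P : G.Walk a b) : Prop :=
  P.IsPath ∧ ∀ i j : ℕ, i + 2 ≤ j → j ≤ P.length →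
    ¬ G.Adj (P.getVert i) (P.getVert j)

/-- Two `a`–`b` walks have disjoint and anticomplete interiors. -/
def IntDisjAnticomplete (G : SimpleGraph V) {a b : V} (P Q : G.Walk a b) : Prop :=
  ∀ u ∈ P.support, ∀ w ∈ Q.support, u ≠ a → u ≠ b → w ≠ a → w ≠ b →
    u ≠ w ∧ ¬ G.Adj u w

/-- `G` contains a theta (as an induced subgraph). -/
def HasTheta (G : SimpleGraph V) : Prop :=
  ∃ (a b : V) (P₁ P₂ P₃ : G.Walk a b),
    ¬ G.Adj a b ∧
    IsInducedPathW G P₁ ∧ 2 ≤ P₁.length ∧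
    IsInducedPathW G P₂ ∧ 2 ≤ P₂.length ∧
    IsInducedPathW G P₃ ∧ 2 ≤ P₃.length ∧
    IntDisjAnticomplete G P₁ P₂ ∧
    IntDisjAnticomplete G P₁ P₃ ∧
    IntDisjAnticomplete G P₂ P₃

/-!
Vertices of `insert x Z` lie in every bag. A vertex of `D i` lies only in bags of `Ti` (as
`N(D i) ⊆ N(x)` and the `D j` are disjoint), so its trace is its trace in `Ti`. For
`a ∈ N(x) \ Z`, every bag containing `a` is joined inside the trace to a bag `inl t` with
`inl a ∈ χ0 t`: if the bag contains `a` because it contains some `d i` with `a ∈ N(D i)`, then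
`a d i` is an edge of `H`, so the trace of `d i` in `T0` reaches a bag containing `inl a`; a bag
of `Ti` first walks through `Ti` to `root i` and across to `att i`, whose bag contains `d i`.
The glued graph is a tree because a cycle leaving `Ti` would cross the only edge
`root i — att i` twice.
-/

open SimpleGraph

namespace ConnectedIn

variable {A B : Type*} {G : SimpleGraph A} {S : Set A} {u w z : A}

lemma refl (hu : u ∈ S) : ConnectedIn G S u u :=
  ⟨.nil, by simp [hu]⟩

lemma symm (h : ConnectedIn G S u w) : ConnectedIn G S w u := by
  obtain ⟨p, hp⟩ := h
  exact ⟨p.reverse, by simpa using hp⟩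

lemma trans (h : ConnectedIn G S u w) (h' : ConnectedIn G S w z) : ConnectedIn G S u z := by
  obtain ⟨p, hp⟩ := h
  obtain ⟨q, hq⟩ := h'
  refine ⟨p.append q, fun y hy => ?_⟩
  rcases Walk.mem_support_append_iff _ _ |>.1 hy with hy | hy
  exacts [hp y hy, hq y hy]

lemma of_adj (h : G.Adj u w) (hu : u ∈ S) (hw : w ∈ S) : ConnectedIn G S u w :=
  ⟨.cons h .nil, by simp [hu, hw]⟩

lemma of_reachable (h : G.Reachable u w) (hS : ∀ y, y ∈ S) : ConnectedIn G S u w :=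
  h.elim fun p => ⟨p, fun y _ => hS y⟩

lemma map {G' : SimpleGraph B} {S' : Set B} (f : G →g G') (hS : ∀ a ∈ S, f a ∈ S')
    (h : ConnectedIn G S u w) : ConnectedIn G' S' (f u) (f w) := by
  obtain ⟨p, hp⟩ := h
  refine ⟨p.map f, fun y hy => ?_⟩
  rw [Walk.support_map, List.mem_map] at hy
  obtain ⟨y, hy, rfl⟩ := hy
  exact hS y (hp y hy)

end ConnectedIn

namespace SimpleGraph

variable {A B : Type*} {G : SimpleGraph A}

lemma Walk.IsCycle.mem_of_unique_exit {w : A} {c : G.Walk w w} (hc : c.IsCycle) {S : Set A}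
    {a b : A} (hexit : ∀ p q, G.Adj p q → p ∈ S → q ∉ S → p = a ∧ q = b)
    {u v : A} (hu : u ∈ c.support) (huS : u ∈ S) (hv : v ∈ c.support) : v ∈ S := by
  classical
  by_contra hvS
  set c' := c.rotate u hu
  have hv' : v ∈ c'.support := (c.mem_support_rotate_iff u hu).2 hv
  obtain ⟨d, hd, hdS, hdS'⟩ := (c'.takeUntil v hv').exists_boundary_dart S huS hvS
  obtain ⟨d', hd', hd'S, hd'S'⟩ :=
    (c'.dropUntil v hv').exists_boundary_dart Sᶜ hvS (not_not.2 huS)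
  have hde : d.edge = s(a, b) := by
    obtain ⟨h1, h2⟩ := hexit _ _ d.adj hdS hdS'
    rw [Dart.edge, Sym2.mk, ← h1, ← h2]
  have hde' : d'.edge = s(a, b) := by
    obtain ⟨h1, h2⟩ := hexit _ _ d'.adj.symm (not_not.1 hd'S') hd'S
    rw [Dart.edge, Sym2.mk, ← h1, ← h2, Sym2.eq_swap]
  have hmem : s(a, b) ∈ (c'.takeUntil v hv').edges := hde ▸ List.mem_map_of_mem hd
  have hmem' : s(a, b) ∈ (c'.dropUntil v hv').edges := hde' ▸ List.mem_map_of_mem hd'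
  exact (hc.rotate hu).isTrail.disjoint_edges_takeUntil_dropUntil hv' hmem hmem'

lemma IsAcyclic.not_isCycle_of_support_subset_range {G' : SimpleGraph B} (f : G ↪g G')
    (hG : G.IsAcyclic) {w : B} {c : G'.Walk w w} (hc : c.IsCycle)
    (hsub : ∀ y ∈ c.support, y ∈ Set.range f) : False := by
  let e : G'.induce (Set.range f) ↪g G' := Embedding.induce _
  refine f.isoInduceRange.isAcyclic_iff.1 hG (c.induce _ hsub) ?_
  rw [← Walk.isCycle_map_iff_of_injective (f := e.toHom) e.injective, Walk.map_induce]
  exact hc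

end SimpleGraph

section Gluing

variable {ι T0 : Type*} {Ti : ι → Type*}

structure IsTreeGluing (tree0 : SimpleGraph T0) (treei : ∀ i, SimpleGraph (Ti i))
    (att : ι → T0) (root : ∀ i, Ti i) (tree : SimpleGraph (T0 ⊕ Σ i, Ti i)) : Prop where
  adj_inl_inl : ∀ s t, tree.Adj (.inl s) (.inl t) ↔ tree0.Adj s t
  adj_inr_inr : ∀ i (s t : Ti i), tree.Adj (.inr ⟨i, s⟩) (.inr ⟨i, t⟩) ↔ (treei i).Adj s t
  not_adj_inr_inr_of_ne : ∀ i j, i ≠ j → ∀ (s : Ti i) (t : Ti j),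
    ¬ tree.Adj (.inr ⟨i, s⟩) (.inr ⟨j, t⟩)
  adj_inl_inr : ∀ i (s : Ti i) t, tree.Adj (.inl t) (.inr ⟨i, s⟩) ↔ t = att i ∧ s = root i

namespace IsTreeGluing

variable {tree0 : SimpleGraph T0} {treei : ∀ i, SimpleGraph (Ti i)} {att : ι → T0}
  {root : ∀ i, Ti i} {tree : SimpleGraph (T0 ⊕ Σ i, Ti i)}

def inlEmbedding (hg : IsTreeGluing tree0 treei att root tree) : tree0 ↪g tree :=
  ⟨⟨Sum.inl, Sum.inl_injective⟩, hg.adj_inl_inl _ _⟩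

def sigmaEmbedding (hg : IsTreeGluing tree0 treei att root tree) (i : ι) : treei i ↪g tree :=
  ⟨⟨fun s => .inr ⟨i, s⟩, fun s t h => by simpa using h⟩, hg.adj_inr_inr i _ _⟩

lemma adj_root_att (hg : IsTreeGluing tree0 treei att root tree) (i : ι) :
    tree.Adj (.inr ⟨i, root i⟩) (.inl (att i)) :=
  ((hg.adj_inl_inr i _ _).2 ⟨rfl, rfl⟩).symm

lemma reachable_att (hg : IsTreeGluing tree0 treei att root tree) {i : ι}
    (hi : (treei i).Connected) (s : Ti i) :
    tree.Reachable (.inr ⟨i, s⟩) (.inl (att i)) :=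
  ((hi.preconnected s (root i)).map (hg.sigmaEmbedding i).toHom).trans
    (hg.adj_root_att i).reachable

lemma connected (hg : IsTreeGluing tree0 treei att root tree)
    (h0 : tree0.Connected) (hi : ∀ i, (treei i).Connected) : tree.Connected := by
  have : Nonempty T0 := h0.nonempty
  have hbase : ∀ p, ∃ t, tree.Reachable p (.inl t) := by
    rintro (t | ⟨i, s⟩)
    exacts [⟨t, .rfl⟩, ⟨att i, hg.reachable_att (hi i) s⟩]
  refine ⟨fun p q => ?_⟩
  obtain ⟨t, hpt⟩ := hbase p
  obtain ⟨t', hqt'⟩ := hbase q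
  exact hpt.trans (((h0.preconnected t t').map hg.inlEmbedding.toHom).trans hqt'.symm)

lemma isAcyclic (hg : IsTreeGluing tree0 treei att root tree)
    (h0 : tree0.IsAcyclic) (hi : ∀ i, (treei i).IsAcyclic) : tree.IsAcyclic := by
  intro w c hc
  have hblock : ∀ i, ∀ p ∈ c.support, p ∈ Set.range (hg.sigmaEmbedding i) →
      ∀ q ∈ c.support, q ∈ Set.range (hg.sigmaEmbedding i) := by
    refine fun i p hp hpi q hq =>
      hc.mem_of_unique_exit (a := .inr ⟨i, root i⟩) (b := .inl (att i)) ?_ hp hpi hq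
    rintro _ (t | ⟨j, t⟩) hadj ⟨s, rfl⟩ hq
    · obtain ⟨rfl, rfl⟩ := (hg.adj_inl_inr i s t).1 hadj.symm
      exact ⟨rfl, rfl⟩
    · obtain rfl | hij := eq_or_ne i j
      · exact absurd ⟨t, rfl⟩ hq
      · exact absurd hadj (hg.not_adj_inr_inr_of_ne i j hij s t)
  rcases w with t | ⟨i, s⟩
  · refine h0.not_isCycle_of_support_subset_range hg.inlEmbedding hc fun q hq => ?_
    rcases q with t' | ⟨j, s⟩
    · exact ⟨t', rfl⟩
    · obtain ⟨_, h⟩ := hblock j _ hq ⟨s, rfl⟩ _ c.start_mem_support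
      simp [sigmaEmbedding] at h
  · exact (hi i).not_isCycle_of_support_subset_range (hg.sigmaEmbedding i) hc
      (hblock i _ c.start_mem_support ⟨s, rfl⟩)

lemma isTree (hg : IsTreeGluing tree0 treei att root tree)
    (h0 : tree0.IsTree) (hi : ∀ i, (treei i).IsTree) : tree.IsTree :=
  ⟨hg.connected h0.connected fun i => (hi i).connected,
    hg.isAcyclic h0.isAcyclic fun i => (hi i).isAcyclic⟩

end IsTreeGluing

end Gluing

lemma IsCompOf.subset {G : SimpleGraph V} {S D : Set V} (h : IsCompOf G S D) : D ⊆ S :=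
  h.2.1

lemma IsCompOf.mem_of_adj {G : SimpleGraph V} {S D : Set V} (h : IsCompOf G S D) {u w : V}
    (hu : u ∈ D) (hw : w ∈ S) (huw : G.Adj u w) : w ∈ D :=
  h.2.2.2 u hu w hw huw

section Extension

variable {ι T0 : Type*} {Ti : ι → Type*} {G : SimpleGraph V} {x : V} {Z : Set V}
  {D : ι → Set V} {χ0 : T0 → Set (V ⊕ ι)} {χi : ∀ i, Ti i → Set V}

variable (G x Z D χ0 χi) in
def extendedBags : T0 ⊕ (Σ i, Ti i) → Set V :=
  Sum.elim
    (fun t => {a : V | Sum.inl a ∈ χ0 t} ∪ Z ∪ {x} ∪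
      ⋃ i, ⋃ (_ : Sum.inr i ∈ χ0 t), (nbhd G (D i) \ Z))
    (fun p => χi p.1 p.2 ∪ (nbhd G (D p.1) \ Z) ∪ Z ∪ {x})

lemma mem_extendedBags_inl {a : V} {t : T0} :
    a ∈ extendedBags G x Z D χ0 χi (.inl t) ↔
      Sum.inl a ∈ χ0 t ∨ a ∈ Z ∨ a = x ∨ ∃ i, Sum.inr i ∈ χ0 t ∧ a ∈ nbhd G (D i) \ Z := by
  simp only [extendedBags, Sum.elim_inl, Set.mem_union, Set.mem_ofPred_eq, Set.mem_singleton_iff,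
    Set.mem_iUnion, exists_prop]
  tauto

lemma mem_extendedBags_inr {a : V} {i : ι} {s : Ti i} :
    a ∈ extendedBags G x Z D χ0 χi (.inr ⟨i, s⟩) ↔
      a ∈ χi i s ∨ a ∈ nbhd G (D i) \ Z ∨ a ∈ Z ∨ a = x := by
  simp only [extendedBags, Sum.elim_inr, Set.mem_union, Set.mem_singleton_iff]
  tauto

lemma mem_extendedBags_of_mem_insert {a : V} (ha : a ∈ insert x Z) (p : T0 ⊕ Σ i, Ti i) :
    a ∈ extendedBags G x Z D χ0 χi p := by
  rcases p with t | ⟨i, s⟩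
  · rw [mem_extendedBags_inl]; rcases ha with rfl | ha <;> simp [*]
  · rw [mem_extendedBags_inr]; rcases ha with rfl | ha <;> simp [*]

variable {H : SimpleGraph (V ⊕ ι)} {tree0 : SimpleGraph T0} {treei : ∀ i, SimpleGraph (Ti i)}

lemma mem_insert_or_mem_diff_or_exists_mem
    (hcover : ∀ w, w ∉ insert x (G.neighborSet x) → ∃ i, w ∈ D i) (a : V) :
    a ∈ insert x Z ∨ a ∈ G.neighborSet x \ Z ∨ ∃ i, a ∈ D i := by
  by_cases haZ : a ∈ insert x Z
  · exact .inl haZ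
  by_cases haN : a ∈ insert x (G.neighborSet x)
  · refine .inr (.inl ⟨haN.resolve_left fun h => haZ (.inl h), fun h => haZ (.inr h)⟩)
  · exact .inr (.inr (hcover a haN))

lemma exists_mem_extendedBags
    (hcover : ∀ w, w ∉ insert x (G.neighborSet x) → ∃ i, w ∈ D i)
    (hdec0 : IsTreeDecompOn H (Sum.inl '' (G.neighborSet x \ Z) ∪ Set.range Sum.inr) tree0 χ0)
    (hdeci : ∀ i, IsTreeDecompOn G (D i) (treei i) (χi i)) (a : V) :
    ∃ p, a ∈ extendedBags G x Z D χ0 χi p := by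
  rcases mem_insert_or_mem_diff_or_exists_mem hcover a with ha | ha | ⟨i, ha⟩
  · exact ⟨.inl hdec0.isTree.connected.nonempty.some, mem_extendedBags_of_mem_insert ha _⟩
  · obtain ⟨t, ht⟩ := hdec0.mem_bag (.inl a) (.inl ⟨a, ha, rfl⟩)
    exact ⟨.inl t, mem_extendedBags_inl.2 (.inl ht)⟩
  · obtain ⟨s, hs⟩ := (hdeci i).mem_bag a ha
    exact ⟨.inr ⟨i, s⟩, mem_extendedBags_inr.2 (.inl hs)⟩

lemma exists_mem_extendedBags_of_adj_of_mem_comp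
    (hcomp : ∀ i, IsCompOf G (insert x (G.neighborSet x))ᶜ (D i))
    (hdeci : ∀ i, IsTreeDecompOn G (D i) (treei i) (χi i)) {i : ι} {a b : V} (ha : a ∈ D i)
    (hab : G.Adj a b) (hb : b ∉ insert x Z) :
    ∃ p, a ∈ extendedBags G x Z D χ0 χi p ∧ b ∈ extendedBags G x Z D χ0 χi p := by
  by_cases hbN : b ∈ insert x (G.neighborSet x)
  · obtain ⟨s, hs⟩ := (hdeci i).mem_bag a ha
    have hbD : b ∉ D i := fun h => (hcomp i).subset h hbN
    refine ⟨.inr ⟨i, s⟩, mem_extendedBags_inr.2 (.inl hs), mem_extendedBags_inr.2 ?_⟩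
    exact .inr (.inl ⟨⟨hbD, a, ha, hab⟩, fun h => hb (.inr h)⟩)
  · obtain ⟨s, has, hbs⟩ :=
      (hdeci i).edge_bag a ha b ((hcomp i).mem_of_adj ha hbN hab) hab
    exact ⟨.inr ⟨i, s⟩, mem_extendedBags_inr.2 (.inl has), mem_extendedBags_inr.2 (.inl hbs)⟩

lemma exists_mem_extendedBags_of_adj
    (hcomp : ∀ i, IsCompOf G (insert x (G.neighborSet x))ᶜ (D i))
    (hcover : ∀ w, w ∉ insert x (G.neighborSet x) → ∃ i, w ∈ D i)
    (hH1 : ∀ a b : V, H.Adj (Sum.inl a) (Sum.inl b) ↔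
      (a ∈ G.neighborSet x \ Z ∧ b ∈ G.neighborSet x \ Z ∧ G.Adj a b))
    (hdec0 : IsTreeDecompOn H (Sum.inl '' (G.neighborSet x \ Z) ∪ Set.range Sum.inr) tree0 χ0)
    (hdeci : ∀ i, IsTreeDecompOn G (D i) (treei i) (χi i)) {a b : V} (hab : G.Adj a b) :
    ∃ p, a ∈ extendedBags G x Z D χ0 χi p ∧ b ∈ extendedBags G x Z D χ0 χi p := by
  have hside : ∀ {a b}, G.Adj a b → a ∈ insert x Z ∨ (∃ i, a ∈ D i) →
      ∃ p, a ∈ extendedBags G x Z D χ0 χi p ∧ b ∈ extendedBags G x Z D χ0 χi p := by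
    rintro a b hab (ha | ⟨i, ha⟩)
    · obtain ⟨p, hb⟩ := exists_mem_extendedBags hcover hdec0 hdeci b
      exact ⟨p, mem_extendedBags_of_mem_insert ha p, hb⟩
    · by_cases hb : b ∈ insert x Z
      · obtain ⟨p, ha⟩ := exists_mem_extendedBags hcover hdec0 hdeci a
        exact ⟨p, ha, mem_extendedBags_of_mem_insert hb p⟩
      · exact exists_mem_extendedBags_of_adj_of_mem_comp hcomp hdeci ha hab hb
  rcases mem_insert_or_mem_diff_or_exists_mem hcover a with ha | ha | ha
  · exact hside hab (.inl ha)
  · rcases mem_insert_or_mem_diff_or_exists_mem hcover b with hb | hb | hb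
    · exact (hside hab.symm (.inl hb)).imp fun _ h => h.symm
    · obtain ⟨t, hat, hbt⟩ := hdec0.edge_bag (.inl a) (.inl ⟨a, ha, rfl⟩) (.inl b)
        (.inl ⟨b, hb, rfl⟩) ((hH1 a b).2 ⟨ha, hb, hab⟩)
      exact ⟨.inl t, mem_extendedBags_inl.2 (.inl hat), mem_extendedBags_inl.2 (.inl hbt)⟩
    · exact (hside hab.symm (.inr hb)).imp fun _ h => h.symm
  · exact hside hab (.inr ha)

variable {att : ι → T0} {root : ∀ i, Ti i} {tree : SimpleGraph (T0 ⊕ Σ i, Ti i)}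

lemma connectedIn_of_mem_insert (htree : tree.Connected) {a : V} (ha : a ∈ insert x Z)
    (p q : T0 ⊕ Σ i, Ti i) : ConnectedIn tree {r | a ∈ extendedBags G x Z D χ0 χi r} p q :=
  .of_reachable (htree.preconnected p q) fun r => mem_extendedBags_of_mem_insert ha r

lemma exists_eq_inr_of_mem_comp (hZ : Z ⊆ G.neighborSet x)
    (hcomp : ∀ i, IsCompOf G (insert x (G.neighborSet x))ᶜ (D i))
    (hdisj : ∀ i j, i ≠ j → Disjoint (D i) (D j))
    (hND : ∀ i, nbhd G (D i) ⊆ G.neighborSet x)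
    (hdec0 : IsTreeDecompOn H (Sum.inl '' (G.neighborSet x \ Z) ∪ Set.range Sum.inr) tree0 χ0)
    (hdeci : ∀ i, IsTreeDecompOn G (D i) (treei i) (χi i)) {i : ι} {a : V} (ha : a ∈ D i)
    {p : T0 ⊕ Σ i, Ti i} (hp : a ∈ extendedBags G x Z D χ0 χi p) :
    ∃ s, p = .inr ⟨i, s⟩ ∧ a ∈ χi i s := by
  have hax : a ≠ x := fun h => (hcomp i).subset ha (.inl h)
  have haN : a ∉ G.neighborSet x := fun h => (hcomp i).subset ha (.inr h)
  rcases p with t | ⟨j, s⟩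
  · rcases mem_extendedBags_inl.1 hp with h | h | h | ⟨j, -, h, -⟩
    · obtain ⟨h, -⟩ : a ∈ G.neighborSet x \ Z := by simpa using hdec0.bags_subset t h
      exact absurd h haN
    exacts [absurd (hZ h) haN, absurd h hax, absurd (hND j h) haN]
  · rcases mem_extendedBags_inr.1 hp with h | ⟨h, -⟩ | h | h
    · obtain rfl | hji := eq_or_ne j i
      · exact ⟨s, rfl, h⟩
      · exact absurd ha (Set.disjoint_left.1 (hdisj j i hji) ((hdeci j).bags_subset s h))
    exacts [absurd (hND j h) haN, absurd (hZ h) haN, absurd h hax]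

lemma connectedIn_of_mem_comp (hZ : Z ⊆ G.neighborSet x)
    (hcomp : ∀ i, IsCompOf G (insert x (G.neighborSet x))ᶜ (D i))
    (hdisj : ∀ i j, i ≠ j → Disjoint (D i) (D j))
    (hND : ∀ i, nbhd G (D i) ⊆ G.neighborSet x)
    (hdec0 : IsTreeDecompOn H (Sum.inl '' (G.neighborSet x \ Z) ∪ Set.range Sum.inr) tree0 χ0)
    (hdeci : ∀ i, IsTreeDecompOn G (D i) (treei i) (χi i))
    (hg : IsTreeGluing tree0 treei att root tree) {i : ι} {a : V} (ha : a ∈ D i)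
    {p q : T0 ⊕ Σ i, Ti i} (hp : a ∈ extendedBags G x Z D χ0 χi p)
    (hq : a ∈ extendedBags G x Z D χ0 χi q) :
    ConnectedIn tree {r | a ∈ extendedBags G x Z D χ0 χi r} p q := by
  obtain ⟨s, rfl, hs⟩ := exists_eq_inr_of_mem_comp hZ hcomp hdisj hND hdec0 hdeci ha hp
  obtain ⟨s', rfl, hs'⟩ := exists_eq_inr_of_mem_comp hZ hcomp hdisj hND hdec0 hdeci ha hq
  exact .map (hg.sigmaEmbedding i).toHom
    (fun _ hr => mem_extendedBags_inr (χ0 := χ0).2 (.inl hr))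
    ((hdeci i).trace_connected a s hs s' hs')

lemma exists_connectedIn_inl_of_mem_diff
    (hcomp : ∀ i, IsCompOf G (insert x (G.neighborSet x))ᶜ (D i))
    (hH2 : ∀ (a : V) (i : ι), H.Adj (Sum.inl a) (Sum.inr i) ↔ a ∈ nbhd G (D i) \ Z)
    (hdec0 : IsTreeDecompOn H (Sum.inl '' (G.neighborSet x \ Z) ∪ Set.range Sum.inr) tree0 χ0)
    (hdeci : ∀ i, IsTreeDecompOn G (D i) (treei i) (χi i))
    (hatt : ∀ i, Sum.inr i ∈ χ0 (att i)) (hg : IsTreeGluing tree0 treei att root tree)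
    {a : V} (ha : a ∈ G.neighborSet x \ Z) {p : T0 ⊕ Σ i, Ti i}
    (hp : a ∈ extendedBags G x Z D χ0 χi p) :
    ∃ t, Sum.inl a ∈ χ0 t ∧ ConnectedIn tree {r | a ∈ extendedBags G x Z D χ0 χi r} p (.inl t) := by
  set R := {r | a ∈ extendedBags G x Z D χ0 χi r}
  have hax : a ≠ x := (G.ne_of_adj ha.1).symm
  have hviaNbhd : ∀ t i, Sum.inr i ∈ χ0 t → a ∈ nbhd G (D i) \ Z →
      ∃ t', Sum.inl a ∈ χ0 t' ∧ ConnectedIn tree R (.inl t) (.inl t') := by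
    intro t i hit hai
    obtain ⟨t', hat', hit'⟩ := hdec0.edge_bag (.inl a) (.inl ⟨a, ha, rfl⟩) (.inr i)
      (.inr ⟨i, rfl⟩) ((hH2 a i).2 hai)
    exact ⟨t', hat', .map hg.inlEmbedding.toHom
      (fun _ hr => mem_extendedBags_inl (χi := χi).2 (.inr (.inr (.inr ⟨i, hr, hai⟩))))
      (hdec0.trace_connected _ t hit t' hit')⟩
  rcases p with t | ⟨i, s⟩
  · rcases mem_extendedBags_inl (χi := χi).1 hp with h | h | h | ⟨i, hit, hai⟩
    exacts [⟨t, h, .refl hp⟩, absurd h ha.2, absurd h hax, hviaNbhd t i hit hai]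
  · have hai : a ∈ nbhd G (D i) \ Z := by
      rcases mem_extendedBags_inr (χ0 := χ0).1 hp with h | h | h | h
      exacts [absurd ha.1 fun hN => (hcomp i).subset ((hdeci i).bags_subset s h) (.inr hN),
        h, absurd h ha.2, absurd h hax]
    have hblock : ∀ s', Sum.inr ⟨i, s'⟩ ∈ R := fun _ =>
      mem_extendedBags_inr (χ0 := χ0).2 (.inr (.inl hai))
    have hattR : Sum.inl (att i) ∈ R :=
      mem_extendedBags_inl (χi := χi).2 (.inr (.inr (.inr ⟨i, hatt i, hai⟩)))
    have hroot : ConnectedIn tree R (.inr ⟨i, s⟩) (.inr ⟨i, root i⟩) :=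
      .map (hg.sigmaEmbedding i).toHom (fun s' _ => hblock s')
        (.of_reachable ((hdeci i).isTree.connected.preconnected s (root i)) fun _ => trivial)
    obtain ⟨t', hat', ht'⟩ := hviaNbhd (att i) i (hatt i) hai
    exact ⟨t', hat', (hroot.trans (.of_adj (hg.adj_root_att i) (hblock _) hattR)).trans ht'⟩

lemma connectedIn_of_mem_diff (hcomp : ∀ i, IsCompOf G (insert x (G.neighborSet x))ᶜ (D i))
    (hH2 : ∀ (a : V) (i : ι), H.Adj (Sum.inl a) (Sum.inr i) ↔ a ∈ nbhd G (D i) \ Z)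
    (hdec0 : IsTreeDecompOn H (Sum.inl '' (G.neighborSet x \ Z) ∪ Set.range Sum.inr) tree0 χ0)
    (hdeci : ∀ i, IsTreeDecompOn G (D i) (treei i) (χi i))
    (hatt : ∀ i, Sum.inr i ∈ χ0 (att i)) (hg : IsTreeGluing tree0 treei att root tree)
    {a : V} (ha : a ∈ G.neighborSet x \ Z) {p q : T0 ⊕ Σ i, Ti i}
    (hp : a ∈ extendedBags G x Z D χ0 χi p) (hq : a ∈ extendedBags G x Z D χ0 χi q) :
    ConnectedIn tree {r | a ∈ extendedBags G x Z D χ0 χi r} p q := by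
  obtain ⟨t, hat, hpt⟩ := exists_connectedIn_inl_of_mem_diff hcomp hH2 hdec0 hdeci hatt hg ha hp
  obtain ⟨t', hat', hqt'⟩ := exists_connectedIn_inl_of_mem_diff hcomp hH2 hdec0 hdeci hatt hg ha hq
  have htt' : ConnectedIn tree {r | a ∈ extendedBags G x Z D χ0 χi r} (.inl t) (.inl t') :=
    .map hg.inlEmbedding.toHom (fun _ hr => mem_extendedBags_inl (χi := χi).2 (.inl hr))
      (hdec0.trace_connected _ t hat t' hat')
  exact (hpt.trans htt').trans hqt'.symm

end Extension

theorem stmt17_general {m : ℕ} {T0 : Type v} {Ti : Fin m → Type v}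
    (G : SimpleGraph V) (x : V) (Z : Set V) (hZ : Z ⊆ G.neighborSet x)
    (D : Fin m → Set V)
    (hcomp : ∀ i, IsCompOf G ((insert x (G.neighborSet x))ᶜ) (D i))
    (hcover : ∀ w, w ∉ insert x (G.neighborSet x) → ∃ i, w ∈ D i)
    (hdisj : ∀ i j, i ≠ j → Disjoint (D i) (D j))
    (hND : ∀ i, nbhd G (D i) ⊆ G.neighborSet x)
    (H : SimpleGraph (V ⊕ Fin m))
    (hH1 : ∀ a b : V, H.Adj (Sum.inl a) (Sum.inl b) ↔
      (a ∈ G.neighborSet x \ Z ∧ b ∈ G.neighborSet x \ Z ∧ G.Adj a b))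
    (hH2 : ∀ (a : V) (i : Fin m),
      H.Adj (Sum.inl a) (Sum.inr i) ↔ a ∈ nbhd G (D i) \ Z)
    (tree0 : SimpleGraph T0) (χ0 : T0 → Set (V ⊕ Fin m))
    (hdec0 : IsTreeDecompOn H
      (Sum.inl '' (G.neighborSet x \ Z) ∪ Set.range Sum.inr) tree0 χ0)
    (treei : ∀ i, SimpleGraph (Ti i)) (χi : ∀ i, Ti i → Set V)
    (hdeci : ∀ i, IsTreeDecompOn G (D i) (treei i) (χi i))
    (att : Fin m → T0) (hatt : ∀ i, Sum.inr i ∈ χ0 (att i))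
    (root : ∀ i, Ti i)
    (tree : SimpleGraph (T0 ⊕ Σ i, Ti i))
    (h1 : ∀ s t : T0, tree.Adj (Sum.inl s) (Sum.inl t) ↔ tree0.Adj s t)
    (h2 : ∀ (i : Fin m) (s t : Ti i),
      tree.Adj (Sum.inr ⟨i, s⟩) (Sum.inr ⟨i, t⟩) ↔ (treei i).Adj s t)
    (h3 : ∀ (i j : Fin m), i ≠ j → ∀ (s : Ti i) (t : Ti j),
      ¬ tree.Adj (Sum.inr ⟨i, s⟩) (Sum.inr ⟨j, t⟩))
    (h4 : ∀ (i : Fin m) (s : Ti i) (t : T0),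
      tree.Adj (Sum.inl t) (Sum.inr ⟨i, s⟩) ↔ (t = att i ∧ s = root i)) :
    IsTreeDecomp G tree
      (Sum.elim
        (fun t => {a : V | Sum.inl a ∈ χ0 t} ∪ Z ∪ {x} ∪
          ⋃ i, ⋃ (_ : Sum.inr i ∈ χ0 t), (nbhd G (D i) \ Z))
        (fun p => χi p.1 p.2 ∪ (nbhd G (D p.1) \ Z) ∪ Z ∪ {x})) := by
  have hg : IsTreeGluing tree0 treei att root tree := ⟨h1, h2, h3, h4⟩
  have htree : tree.IsTree := hg.isTree hdec0.isTree fun i => (hdeci i).isTree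
  refine ⟨htree, fun _ => Set.subset_univ _,
    fun a _ => exists_mem_extendedBags hcover hdec0 hdeci a,
    fun a _ b _ hab => exists_mem_extendedBags_of_adj hcomp hcover hH1 hdec0 hdeci hab,
    fun a p hp q hq => ?_⟩
  rcases mem_insert_or_mem_diff_or_exists_mem (Z := Z) hcover a with ha | ha | ⟨i, ha⟩
  · exact connectedIn_of_mem_insert htree.connected ha p q
  · exact connectedIn_of_mem_diff hcomp hH2 hdec0 hdeci hatt hg ha hp hq
  · exact connectedIn_of_mem_comp hZ hcomp hdisj hND hdec0 hdeci hg ha hp hq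

/-- Extending a tree decomposition of the contracted neighborhood graph `H` of
a vertex `x` to a tree decomposition of `G`. -/
theorem stmt17 {m : ℕ} {T0 : Type v} {Ti : Fin m → Type v}
    (G : SimpleGraph V) (x : V) (Z : Set V) (hZ : Z ⊆ G.neighborSet x)
    (D : Fin m → Set V)
    (hcomp : ∀ i, IsCompOf G ((insert x (G.neighborSet x))ᶜ) (D i))
    (hcover : ∀ w, w ∉ insert x (G.neighborSet x) → ∃ i, w ∈ D i)
    (hdisj : ∀ i j, i ≠ j → Disjoint (D i) (D j))
    (hND : ∀ i, nbhd G (D i) ⊆ G.neighborSet x)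
    (H : SimpleGraph (V ⊕ Fin m))
    (hH1 : ∀ a b : V, H.Adj (Sum.inl a) (Sum.inl b) ↔
      (a ∈ G.neighborSet x \ Z ∧ b ∈ G.neighborSet x \ Z ∧ G.Adj a b))
    (hH2 : ∀ (a : V) (i : Fin m),
      H.Adj (Sum.inl a) (Sum.inr i) ↔ a ∈ nbhd G (D i) \ Z)
    (hH3 : ∀ i j : Fin m, ¬ H.Adj (Sum.inr i) (Sum.inr j))
    (tree0 : SimpleGraph T0) (χ0 : T0 → Set (V ⊕ Fin m))
    (hdec0 : IsTreeDecompOn H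
      (Sum.inl '' (G.neighborSet x \ Z) ∪ Set.range Sum.inr) tree0 χ0)
    (treei : ∀ i, SimpleGraph (Ti i)) (χi : ∀ i, Ti i → Set V)
    (hdeci : ∀ i, IsTreeDecompOn G (D i) (treei i) (χi i))
    (att : Fin m → T0) (hatt : ∀ i, Sum.inr i ∈ χ0 (att i))
    (root : ∀ i, Ti i)
    (tree : SimpleGraph (T0 ⊕ Σ i, Ti i))
    (h1 : ∀ s t : T0, tree.Adj (Sum.inl s) (Sum.inl t) ↔ tree0.Adj s t)
    (h2 : ∀ (i : Fin m) (s t : Ti i),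
      tree.Adj (Sum.inr ⟨i, s⟩) (Sum.inr ⟨i, t⟩) ↔ (treei i).Adj s t)
    (h3 : ∀ (i j : Fin m), i ≠ j → ∀ (s : Ti i) (t : Ti j),
      ¬ tree.Adj (Sum.inr ⟨i, s⟩) (Sum.inr ⟨j, t⟩))
    (h4 : ∀ (i : Fin m) (s : Ti i) (t : T0),
      tree.Adj (Sum.inl t) (Sum.inr ⟨i, s⟩) ↔ (t = att i ∧ s = root i)) :
    IsTreeDecomp G tree
      (Sum.elim
        (fun t => {a : V | Sum.inl a ∈ χ0 t} ∪ Z ∪ {x} ∪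
          ⋃ i, ⋃ (_ : Sum.inr i ∈ χ0 t), (nbhd G (D i) \ Z))
        (fun p => χi p.1 p.2 ∪ (nbhd G (D p.1) \ Z) ∪ Z ∪ {x})) :=
  stmt17_general G x Z hZ D hcomp hcover hdisj hND H hH1 hH2 tree0 χ0 hdec0 treei χi hdeci att hatt
    root tree h1 h2 h3 h4
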